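/- Let m be even, A ∈ C_{m,n} a doubly circulant tensor whose root tensor A_1 is also doubly circulant, with A_{11} ∈ T_{m-2,n} the root tensor of A_1. Then for all x ∈ ℝ^n, A x^m = (Σ_{k=1}^n x_k)² · A_{11} x^{m-2}. Consequently: (a) if A_{11} is positive semi-definite then A is positive semi-definite; (b) if A is positive semi-definite then A_{11} x^{m-2} ≥ 0 for every x ∈ ℝ^n with Σ_{k=1}^n x_k ≠ 0. -/

import Mathlib

/-!
Shifting every index of a circulant tensor by `i` turns the row `B (i, ·)` into
`B (0, · - i)`, and circulance of the root tensor undoes the shift of the remaining indices.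
So every row tensor equals the root tensor, and `B x^k = (∑ x_k) · B₁ x^(k-1)`. Applied to
`A` and then to `A₁` this gives `A x^m = (∑ x_k)² · A₁₁ x^(m-2)`, and (a), (b) follow because
a square is nonnegative, and positive where `∑ x_k ≠ 0`.
-/

open Finset

def IsCirculant {ι α : Type*} {n : ℕ} [NeZero n] (B : (ι → Fin n) → α) : Prop :=
  ∀ j, B j = B (fun l => j l + 1)

def rootTensor {α : Type*} {k n : ℕ} [NeZero n] (B : (Fin (k + 1) → Fin n) → α) :
    (Fin k → Fin n) → α :=
  fun t => B (Fin.cons 0 t)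

/-- The paper's `B x^k`. -/
def tensorForm {R : Type*} [CommSemiring R] {k n : ℕ} (B : (Fin k → Fin n) → R)
    (x : Fin n → R) : R :=
  ∑ j, B j * ∏ l, x (j l)

theorem Fin.sum_pi_succ_eq_sum_cons {M β : Type*} [AddCommMonoid M] [Fintype β] {k : ℕ}
    (f : (Fin (k + 1) → β) → M) :
    ∑ j, f j = ∑ i, ∑ t, f (Fin.cons i t) := by
  rw [← (Fin.consEquiv fun _ => β).sum_comp f, Fintype.sum_prod_type]
  rfl

namespace IsCirculant

variable {ι α : Type*} {n : ℕ} [NeZero n]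

open Fin.NatCast in
theorem apply_add_const {B : (ι → Fin n) → α} (hB : IsCirculant B) (j : ι → Fin n)
    (c : Fin n) : B (fun l => j l + c) = B j := by
  suffices h : ∀ k : ℕ, ∀ j, B (fun l => j l + (k : Fin n)) = B j by
    simpa using h c.val j
  intro k
  induction k with
  | zero => simp
  | succ k ih =>
    intro j
    simp only [Nat.cast_succ, ← add_assoc]
    rw [← hB, ih]

theorem apply_cons {k : ℕ} {B : (Fin (k + 1) → Fin n) → α} (hB : IsCirculant B)
    (hB₁ : IsCirculant (rootTensor B)) (i : Fin n) (t : Fin k → Fin n) :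
    B (Fin.cons i t) = rootTensor B t := by
  have hshift : (Fin.cons i t : Fin (k + 1) → Fin n) =
      fun l => (Fin.cons 0 (fun l => t l - i) : Fin (k + 1) → Fin n) l + i := by
    funext l
    cases l using Fin.cases <;> simp
  have hroot := hB₁.apply_add_const (fun l => t l - i) i
  simp only [sub_add_cancel] at hroot
  rw [hshift, hB.apply_add_const]
  exact hroot.symm

theorem tensorForm_eq_sum_mul {R : Type*} [CommSemiring R] {k : ℕ}
    {B : (Fin (k + 1) → Fin n) → R} (hB : IsCirculant B) (hB₁ : IsCirculant (rootTensor B))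
    (x : Fin n → R) :
    tensorForm B x = (∑ i, x i) * tensorForm (rootTensor B) x := by
  rw [tensorForm, tensorForm, Fin.sum_pi_succ_eq_sum_cons, sum_mul_sum]
  refine sum_congr rfl fun i _ => sum_congr rfl fun t _ => ?_
  rw [hB.apply_cons hB₁, Fin.prod_univ_succ]
  simp only [Fin.cons_zero, Fin.cons_succ]
  ring

end IsCirculant

theorem stmt_19_general (m n : ℕ) [NeZero n]
    (A : (Fin (m + 2) → Fin n) → ℝ)
    (hA : ∀ j : Fin (m + 2) → Fin n, A j = A (fun l => j l + 1))
    (hA1 : ∀ t : Fin (m + 1) → Fin n,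
      A (Fin.cons 0 t) = A (Fin.cons 0 (fun l => t l + 1)))
    (hA11 : ∀ t : Fin m → Fin n,
      A (Fin.cons 0 (Fin.cons 0 t)) = A (Fin.cons 0 (Fin.cons 0 (fun l => t l + 1)))) :
    (∀ x : Fin n → ℝ,
      ∑ j : Fin (m + 2) → Fin n, A j * ∏ l, x (j l)
        = (∑ k, x k) ^ 2 * ∑ t : Fin m → Fin n, A (Fin.cons 0 (Fin.cons 0 t)) * ∏ l, x (t l)) ∧
    ((∀ x : Fin n → ℝ,
        0 ≤ ∑ t : Fin m → Fin n, A (Fin.cons 0 (Fin.cons 0 t)) * ∏ l, x (t l)) →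
      ∀ x : Fin n → ℝ, 0 ≤ ∑ j : Fin (m + 2) → Fin n, A j * ∏ l, x (j l)) ∧
    ((∀ x : Fin n → ℝ, 0 ≤ ∑ j : Fin (m + 2) → Fin n, A j * ∏ l, x (j l)) →
      ∀ x : Fin n → ℝ, (∑ k, x k) ≠ 0 →
        0 ≤ ∑ t : Fin m → Fin n, A (Fin.cons 0 (Fin.cons 0 t)) * ∏ l, x (t l)) := by
  have hform (x : Fin n → ℝ) :
      tensorForm A x = (∑ k, x k) ^ 2 * tensorForm (rootTensor (rootTensor A)) x := by
    rw [IsCirculant.tensorForm_eq_sum_mul hA hA1,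
      IsCirculant.tensorForm_eq_sum_mul (B := rootTensor A) hA1 hA11]
    ring
  refine ⟨hform, fun h x => ?_, fun h x hx => ?_⟩
  · exact (mul_nonneg (sq_nonneg _) (h x)).trans_eq (hform x).symm
  · exact nonneg_of_mul_nonneg_right ((h x).trans_eq (hform x)) (by positivity)

/-- Let the order `m+2` be even and `A ∈ C_{m+2,n}` a doubly circulant tensor (`A` and its
root tensor `A₁` are circulant) whose root tensor `A₁` is itself doubly circulant (its
root tensor `A₁₁` is circulant). Then `A x^{m+2} = (∑_k x_k)² · A₁₁ x^m` for all `x ∈ ℝⁿ`;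
consequently (a) if `A₁₁` is positive semi-definite then so is `A`, and (b) if `A` is
positive semi-definite then `A₁₁ x^m ≥ 0` whenever `∑_k x_k ≠ 0`. -/
theorem stmt_19 (m n : ℕ) [NeZero n] (hm : Even (m + 2))
    (A : (Fin (m + 2) → Fin n) → ℝ)
    (hA : ∀ j : Fin (m + 2) → Fin n, A j = A (fun l => j l + 1))
    (hA1 : ∀ t : Fin (m + 1) → Fin n,
      A (Fin.cons 0 t) = A (Fin.cons 0 (fun l => t l + 1)))
    (hA11 : ∀ t : Fin m → Fin n,
      A (Fin.cons 0 (Fin.cons 0 t)) = A (Fin.cons 0 (Fin.cons 0 (fun l => t l + 1)))) :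
    (∀ x : Fin n → ℝ,
      ∑ j : Fin (m + 2) → Fin n, A j * ∏ l, x (j l)
        = (∑ k, x k) ^ 2 * ∑ t : Fin m → Fin n, A (Fin.cons 0 (Fin.cons 0 t)) * ∏ l, x (t l)) ∧
    ((∀ x : Fin n → ℝ,
        0 ≤ ∑ t : Fin m → Fin n, A (Fin.cons 0 (Fin.cons 0 t)) * ∏ l, x (t l)) →
      ∀ x : Fin n → ℝ, 0 ≤ ∑ j : Fin (m + 2) → Fin n, A j * ∏ l, x (j l)) ∧
    ((∀ x : Fin n → ℝ, 0 ≤ ∑ j : Fin (m + 2) → Fin n, A j * ∏ l, x (j l)) →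
      ∀ x : Fin n → ℝ, (∑ k, x k) ≠ 0 →
        0 ≤ ∑ t : Fin m → Fin n, A (Fin.cons 0 (Fin.cons 0 t)) * ∏ l, x (t l)) :=
  stmt_19_general m n A hA hA1 hA11
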